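/- Let q be a prime power, let m ≥ 4 be an even integer, let n = (q^m − 1)/(q − 1), let δ be an integer with 2 ≤ δ ≤ q^{m/2}, and set ε = ⌊(δ−2)(q−1)/(q^{m/2}−1)⌋ and ε̄ = ⌊(δ−1)(q−1)/(q^{m/2}−1)⌋. Then the set {0} ∪ ⋃_{i=1}^{δ−1} (C_i ∪ (−C_i)) ⊆ Z_n, where −C_i = {n − a mod n : a ∈ C_i}, has cardinality 1 + 2m⌈(δ−1)(q−1)/q⌉ − (2ε − (q−2))m − ε̄m if ε ≥ ⌊(q−1)/2⌋, and cardinality 1 + 2m⌈(δ−1)(q−1)/q⌉ − ε̄m if ε < ⌊(q−1)/2⌋. Consequently, the reversible BCH code C_{(q,n,2δ,1−δ)} of length n has dimension n minus this cardinality. -/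
import Mathlib


/-- The `q`-cyclotomic coset of `a` modulo `n`. -/
def cosetC (q n a : ℕ) : Set ℕ := {b | ∃ j : ℕ, b = a * q ^ j % n}


structure Setup (q s t n : ℕ) : Prop where
  hq : 2 ≤ q
  hs : 2 ≤ s
  ht : (q - 1) * t = q ^ s - 1
  hn : n = (q ^ s + 1) * t

namespace Setup
variable {q s t n : ℕ}

lemma hpos (S : Setup q s t n) : 1 ≤ q ^ s := Nat.one_le_pow _ _ (by have := S.hq; omega)

lemma hqs (S : Setup q s t n) : q * q ≤ q ^ s := by
  calc q * q = q ^ 2 := (sq q).symm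
  _ ≤ q ^ s := Nat.pow_le_pow_right (by have := S.hq; omega) S.hs

lemma tlb (S : Setup q s t n) : q + 1 ≤ t := by
  have hq := S.hq
  have h1 : (q - 1) * (q + 1) ≤ (q - 1) * t := by
    rw [S.ht]
    have h2 := S.hqs
    have h3 : (q-1) * (q+1) + 1 = q * q := by zify [show 1 ≤ q by omega]; ring
    omega
  exact Nat.le_of_mul_le_mul_left h1 (by omega)

lemma hmul (S : Setup q s t n) : (q - 1) * n = q ^ (2 * s) - 1 := by
  have h2 : q ^ (2 * s) = q ^ s * q ^ s := by rw [two_mul, pow_add]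
  have h1 := S.hpos
  have ht := S.ht
  have hq := S.hq
  rw [S.hn, h2]
  have h4 : (q - 1) * ((q ^ s + 1) * t) = (q ^ s + 1) * ((q-1) * t) := by ring
  rw [h4, ht]
  zify [h1, Nat.one_le_two_pow, show 1 ≤ q^s * q^s from Nat.one_le_iff_ne_zero.2 (by positivity)]
  ring

lemma npos (S : Setup q s t n) : 1 ≤ n := by
  have h1 := S.tlb; have := S.hq; have := S.hpos
  have h2 : 0 < (q ^ s + 1) * t := Nat.mul_pos (by omega) (by omega)
  rw [S.hn]; omega

lemma h_lt_n (S : Setup q s t n) : q ^ s < n := by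
  have := S.tlb; have := S.hq
  have h1 : (q ^ s + 1) * 1 ≤ (q ^ s + 1) * t := Nat.mul_le_mul_left _ (by omega)
  rw [S.hn]; omega

lemma pow_cycle (S : Setup q s t n) : q ^ (2 * s) ≡ 1 [MOD n] := by
  have h1 : n ∣ q ^ (2 * s) - 1 := Dvd.intro_left _ S.hmul
  have h2 : 1 ≤ q ^ (2 * s) := Nat.one_le_pow _ _ (by have := S.hq; omega)
  exact ((Nat.modEq_iff_dvd' h2).2 h1).symm

lemma t_mod_q (S : Setup q s t n) : t % q = 1 := by
  have hq := S.hq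
  have htl := S.tlb
  have h0 : q ∣ q ^ s := dvd_pow_self q (by have := S.hs; omega)
  have h1 : (q - 1) * (t - 1) = (q ^ s - 1) - (q - 1) := by
    have := S.ht
    have h2 : (q-1) * (t-1) = (q-1)*t - (q-1)*1 := by rw [Nat.mul_sub]
    omega
  have h2 : q ∣ (q - 1) * (t - 1) := by
    rw [h1]
    have h3 : 1 ≤ q ^ s := S.hpos
    obtain ⟨c, hc⟩ := h0
    have h5 : q ^ s - 1 - (q - 1) = q * c - q := by omega
    rw [h5]
    exact Nat.dvd_sub (Dvd.intro c rfl) dvd_rfl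
  have h4 : q ∣ t - 1 := by
    have h5 : q * (t-1) - (q-1) * (t-1) = t - 1 := by
      have : q * (t-1) = (q-1)*(t-1) + 1*(t-1) := by rw [← Nat.add_mul]; congr 1; omega
      omega
    rw [← h5]
    exact Nat.dvd_sub (Dvd.intro (t-1) rfl) h2
  obtain ⟨e, he⟩ := h4
  have h6 : t = 1 + q * e := by omega
  rw [h6, Nat.add_mul_mod_self_left]
  exact Nat.mod_eq_of_lt (by omega)

lemma n_mod_q (S : Setup q s t n) : n % q = 1 := by
  have hq := S.hq
  have h0 : q ∣ q ^ s := dvd_pow_self q (by have := S.hs; omega)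
  have ht1 := S.t_mod_q
  obtain ⟨c, hc⟩ := h0
  obtain ⟨d, hd⟩ : ∃ d, t = q * d + 1 := ⟨t / q, by have := Nat.div_add_mod t q; omega⟩
  have h1 : n = 1 + (c * (q*d+1) + d) * q := by rw [S.hn, hc, hd]; ring
  rw [h1, Nat.add_mul_mod_self_right]
  exact Nat.mod_eq_of_lt (by omega)

end Setup

namespace Setup
variable {q s t n : ℕ}

lemma small_bound (S : Setup q s t n) {i a : ℕ} (ha : a < s) (hi : i < q ^ s) :
    i * q ^ a + (q ^ s - 1) < n := by
  have hq := S.hq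
  have hp := S.hpos
  have e0 : q ^ a ≤ q ^ (s-1) := Nat.pow_le_pow_right (by omega) (by omega)
  have e1 : q ≤ q ^ (s-1) := by
    calc q = q ^ 1 := (pow_one q).symm
    _ ≤ q ^ (s-1) := Nat.pow_le_pow_right (by omega) (by have := S.hs; omega)
  have epow : q ^ (s-1) * q = q ^ s := by
    rw [← pow_succ]; congr 1; have := S.hs; omega
  have e2 : (q - 1) * (q ^ (s-1) + 1) ≤ q ^ s := by
    have eA : (q - 1) * (q ^ (s-1) + 1) = q * (q ^ (s-1) + 1) - (q ^ (s-1) + 1) :=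
      Nat.sub_one_mul _ _
    have eB : q * (q ^ (s-1) + 1) = q ^ s + q := by
      rw [mul_add, mul_one, mul_comm, epow]
    omega
  have e3 : (q - 1) * ((q ^ s - 1) * (q ^ (s-1) + 1)) < (q - 1) * n := by
    rw [S.hmul]
    have h2s : q ^ (2*s) = q ^ s * q ^ s := by rw [two_mul, pow_add]
    calc (q - 1) * ((q ^ s - 1) * (q ^ (s-1) + 1))
        = (q ^ s - 1) * ((q - 1) * (q ^ (s-1) + 1)) := by ring
      _ ≤ (q ^ s - 1) * q ^ s := Nat.mul_le_mul_left _ e2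
      _ < q ^ (2*s) - 1 := by
          rw [h2s]
          have h4 : 4 ≤ q ^ s := le_trans (by nlinarith) S.hqs
          have h5 : (q ^ s - 1) * q ^ s + q ^ s = q ^ s * q ^ s := by
            zify [hp]; ring
          omega
  have e4 : (q ^ s - 1) * (q ^ (s-1) + 1) < n := Nat.lt_of_mul_lt_mul_left e3
  have e5 : i * q ^ a ≤ (q ^ s - 1) * q ^ (s-1) :=
    Nat.mul_le_mul (by omega) e0
  have e6 : (q ^ s - 1) * (q ^ (s-1) + 1) = (q ^ s - 1) * q ^ (s-1) + (q ^ s - 1) := by ring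
  omega

lemma key1 (S : Setup q s t n) {i j a : ℕ} (hi1 : 1 ≤ i) (hih : i < q ^ s)
    (hj1 : 1 ≤ j) (hjh : j < q ^ s) (hqi : ¬ q ∣ i) (hqj : ¬ q ∣ j) (ha : a < 2 * s)
    (hmod : i * q ^ a ≡ j [MOD n]) :
    (a = 0 ∧ i = j) ∨
      (a = s ∧ ∃ k, 1 ≤ k ∧ k ≤ q - 2 ∧ i = k * t + 1 ∧ j = (q - 1 - k) * t + 1) := by
  have hq := S.hq
  have hp := S.hpos
  have hlt := S.h_lt_n
  have hjn : j % n = j := Nat.mod_eq_of_lt (by omega)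
  rcases Nat.lt_trichotomy a s with hlt' | heq | hgt
  · -- a < s : i q^a = j, forces a = 0
    have hb := S.small_bound hlt' hih
    have h1 : i * q ^ a % n = i * q ^ a := Nat.mod_eq_of_lt (by omega)
    have h2 : i * q ^ a = j := by
      have := hmod; unfold Nat.ModEq at this; omega
    left
    rcases Nat.eq_zero_or_pos a with rfl | hapos
    · exact ⟨rfl, by simpa using h2⟩
    · exfalso; apply hqj
      obtain ⟨b, rfl⟩ : ∃ b, a = b + 1 := ⟨a - 1, by omega⟩
      exact ⟨i * q ^ b, by rw [← h2, pow_succ]; ring⟩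
  · -- a = s
    subst heq
    right
    refine ⟨rfl, ?_⟩
    have h1 : i * q ^ a % n = j := by
      have := hmod; unfold Nat.ModEq at this; omega
    have hKdef : i * q ^ a = n * (i * q ^ a / n) + j := by
      conv_lhs => rw [← Nat.div_add_mod (i * q ^ a) n, h1]
    obtain ⟨K, hKeq⟩ : ∃ K, i * q ^ a = n * K + j := ⟨_, hKdef⟩
    have hK1 : 1 ≤ K := by
      by_contra hc
      have hc0 : K = 0 := by omega
      rw [hc0] at hKeq
      have : q ^ a ≤ i * q ^ a := Nat.le_mul_of_pos_left _ (by omega)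
      omega
    have h2s : q ^ (2*a) = q ^ a * q ^ a := by rw [two_mul, pow_add]
    have h4 : 4 ≤ q ^ a := le_trans (by nlinarith) S.hqs
    have hKq : K ≤ q - 2 := by
      have hub : n * K ≤ (q ^ a - 1) * q ^ a - 1 := by
        have : i * q ^ a ≤ (q ^ a - 1) * q ^ a := Nat.mul_le_mul_right _ (by omega)
        omega
      have hsq : (q ^ a - 1) * q ^ a + q ^ a = q ^ a * q ^ a := by zify [hp]; ring
      have hqn : n * (q - 1) = q ^ a * q ^ a - 1 := by
        rw [mul_comm, S.hmul, h2s]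
      by_contra hc
      have hge : q - 1 ≤ K := by omega
      have : n * (q-1) ≤ n * K := Nat.mul_le_mul_left _ hge
      omega
    -- expand n
    have hn' : i * q ^ a = q ^ a * (t * K) + (t * K + j) := by
      rw [hKeq, S.hn]; ring
    have hiKt : t * K < i := by
      by_contra hc
      push_neg at hc
      have h6 : i * q ^ a ≤ (t * K) * q ^ a := Nat.mul_le_mul_right _ hc
      have h7 : (t*K) * q ^ a = q ^ a * (t*K) := by ring
      omega
    obtain ⟨d, hd, hdpos⟩ : ∃ d, i = t * K + d ∧ 1 ≤ d := ⟨i - t*K, by omega, by omega⟩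
    have hdq : d * q ^ a = t * K + j := by
      have h8 : (t * K + d) * q ^ a = q ^ a * (t*K) + d * q ^ a := by ring
      rw [hd, h8] at hn'
      omega
    have htK : t * K + t ≤ q ^ a - 1 + t := by
      have h9 : t * K ≤ t * (q - 2) := Nat.mul_le_mul_left _ hKq
      have h10a : t * (q - 2) = t * q - t * 2 := Nat.mul_sub ..
      have h10b : t * (q - 1) = t * q - t * 1 := Nat.mul_sub ..
      have h11 : t * (q-1) = q ^ a - 1 := by rw [mul_comm]; exact S.ht
      omega
    have htlb := S.tlb
    have hd1 : d = 1 := by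
      by_contra hc
      have h12 : 2 * q ^ a ≤ d * q ^ a := Nat.mul_le_mul_right _ (by omega)
      omega
    rw [hd1, one_mul] at hdq
    refine ⟨K, hK1, hKq, by rw [hd, hd1, mul_comm], ?_⟩
    have h13 : (q - 1 - K) * t = (q-1) * t - K * t := Nat.sub_mul _ _ _
    have h14 : (q-1) * t = q ^ a - 1 := S.ht
    have h15 : K * t = t * K := mul_comm _ _
    omega
  · -- a > s
    exfalso
    obtain ⟨b, hb1, hbs, hab2⟩ : ∃ b, 1 ≤ b ∧ b < s ∧ a + b = 2*s :=
      ⟨2*s - a, by omega, by omega, by omega⟩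
    have hmod2 : i * q ^ a * q ^ b ≡ j * q ^ b [MOD n] := hmod.mul_right _
    have hab : q ^ a * q ^ b = q ^ (2*s) := by rw [← pow_add]; congr 1
    have hmod3 : i * q ^ (2*s) ≡ j * q ^ b [MOD n] := by
      rw [← hab, ← mul_assoc]; exact hmod2
    have hmod4 : i ≡ j * q ^ b [MOD n] := by
      calc i = i * 1 := (mul_one i).symm
      _ ≡ i * q ^ (2*s) [MOD n] := (S.pow_cycle.symm).mul_left i
      _ ≡ j * q ^ b [MOD n] := hmod3
    have hsb := S.small_bound hbs hjh
    have h5 : i = j * q ^ b := by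
      have h6 : i % n = i := Nat.mod_eq_of_lt (by omega)
      have h7 : j * q ^ b % n = j * q ^ b := Nat.mod_eq_of_lt (by omega)
      have := hmod4; unfold Nat.ModEq at this; omega
    apply hqi
    obtain ⟨c, rfl⟩ : ∃ c, b = c + 1 := ⟨b - 1, by omega⟩
    exact ⟨j * q ^ c, by rw [h5, pow_succ]; ring⟩

end Setup

namespace Setup
variable {q s t n : ℕ}

lemma key2 (S : Setup q s t n) {i j a : ℕ} (hi1 : 1 ≤ i) (hih : i < q ^ s)
    (hj1 : 1 ≤ j) (hjh : j < q ^ s) (ha : a < 2 * s)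
    (hmod : n ∣ i * q ^ a + j) :
    a = s ∧ ∃ k, 1 ≤ k ∧ k ≤ q - 1 ∧ i = t * k ∧ j = t * k := by
  have hq := S.hq
  have hp := S.hpos
  have hlt := S.h_lt_n
  rcases Nat.lt_trichotomy a s with hlt' | heq | hgt
  · -- a < s : 0 < i q^a + j < n, impossible
    exfalso
    have hb := S.small_bound hlt' hih
    have hpos : 0 < i * q ^ a + j := by positivity
    have := Nat.le_of_dvd hpos hmod
    omega
  · subst heq
    refine ⟨rfl, ?_⟩
    obtain ⟨K, hKeq⟩ := hmod
    have hK1 : 1 ≤ K := by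
      rcases Nat.eq_zero_or_pos K with rfl | h; · simp at hKeq; omega
      · exact h
    have h2s : q ^ (2*a) = q ^ a * q ^ a := by rw [two_mul, pow_add]
    have h4 : 4 ≤ q ^ a := le_trans (by nlinarith) S.hqs
    have hKq : K ≤ q - 1 := by
      have hub : i * q ^ a + j ≤ (q ^ a - 1) * q ^ a + (q ^ a - 1) := by
        have : i * q ^ a ≤ (q ^ a - 1) * q ^ a := Nat.mul_le_mul_right _ (by omega)
        omega
      have hsq : (q ^ a - 1) * q ^ a + q ^ a = q ^ a * q ^ a := by zify [hp]; ring
      have hqn : n * (q - 1) = q ^ a * q ^ a - 1 := by rw [mul_comm, S.hmul, h2s]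
      by_contra hc
      have hge : q ≤ K := by omega
      have h5 : n * q ≤ n * K := Nat.mul_le_mul_left _ hge
      have h6 : n * q = n * (q-1) + n * 1 := by rw [← Nat.mul_add]; congr 1; omega
      omega
    have hn' : i * q ^ a + j = q ^ a * (t * K) + t * K := by
      rw [hKeq, S.hn]; ring
    have htlb := S.tlb
    have htKlt : t * K < q ^ a := by
      have h9 : t * K ≤ t * (q - 1) := Nat.mul_le_mul_left _ hKq
      have h10 : t * (q - 1) = q ^ a - 1 := by rw [mul_comm]; exact S.ht
      omega
    have hitk : i = t * K := by
      rcases Nat.lt_trichotomy i (t*K) with hc | he | hc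
      · exfalso
        have h6 : q ^ a * (i+1) ≤ q ^ a * (t*K) := Nat.mul_le_mul_left _ (by omega)
        have h7 : q ^ a * (i+1) = i * q ^ a + q ^ a := by ring
        omega
      · exact he
      · exfalso
        have h6 : (t*K+1) * q ^ a ≤ i * q ^ a := Nat.mul_le_mul_right _ (by omega)
        have h7 : (t*K+1) * q ^ a = q ^ a * (t*K) + q ^ a := by ring
        omega
    refine ⟨K, hK1, hKq, hitk, ?_⟩
    have h6 : i * q ^ a = q ^ a * (t * K) := by rw [hitk]; ring
    omega
  · -- a > s
    exfalso
    obtain ⟨b, hb1, hbs, hab2⟩ : ∃ b, 1 ≤ b ∧ b < s ∧ a + b = 2*s :=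
      ⟨2*s - a, by omega, by omega, by omega⟩
    have hmod2 : (i * q ^ a + j) * q ^ b ≡ 0 * q ^ b [MOD n] :=
      ((Nat.modEq_zero_iff_dvd).2 hmod).mul_right _
    have hab : q ^ a * q ^ b = q ^ (2*s) := by rw [← pow_add]; congr 1
    have hmod3 : i * q ^ (2*s) + j * q ^ b ≡ 0 [MOD n] := by
      have : (i * q ^ a + j) * q ^ b = i * (q ^ a * q ^ b) + j * q ^ b := by ring
      simpa [this, hab] using hmod2
    have hmod4 : i + j * q ^ b ≡ 0 [MOD n] := by
      calc i + j * q ^ b = i * 1 + j * q ^ b := by ring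
      _ ≡ i * q ^ (2*s) + j * q ^ b [MOD n] := ((S.pow_cycle.symm).mul_left i).add_right _
      _ ≡ 0 [MOD n] := hmod3
    have hdvd : n ∣ i + j * q ^ b := (Nat.modEq_zero_iff_dvd).1 hmod4
    have hsb := S.small_bound hbs hjh
    have hpos : 0 < i + j * q ^ b := by positivity
    have := Nat.le_of_dvd hpos hdvd
    omega

end Setup

def cfin (q s n i : ℕ) : Finset ℕ := (Finset.range (2*s)).image (fun a => i * q ^ a % n)

namespace Setup
variable {q s t n : ℕ}

lemma mulpow (S : Setup q s t n) (x e : ℕ) : x * q ^ (e + 2*s) ≡ x * q ^ e [MOD n] := by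
  have h1 : x * q ^ (e + 2*s) = (x * q ^ e) * q ^ (2*s) := by rw [pow_add]; ring
  calc x * q ^ (e + 2*s) = (x * q ^ e) * q ^ (2*s) := h1
  _ ≡ (x * q ^ e) * 1 [MOD n] := S.pow_cycle.mul_left _
  _ = x * q ^ e := mul_one _

lemma mulpow_mod (S : Setup q s t n) (x e : ℕ) :
    x * q ^ e % n = x * q ^ (e % (2*s)) % n := by
  have key : ∀ r d, x * q ^ (r + 2*s*d) % n = x * q ^ r % n := by
    intro r d
    induction d with
    | zero => simp
    | succ d ih =>
      have h1 : r + 2*s*(d+1) = (r + 2*s*d) + 2*s := by ring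
      rw [h1]
      have h2 := S.mulpow x (r + 2*s*d)
      unfold Nat.ModEq at h2
      omega
  have h2 : e = e % (2*s) + 2*s * (e / (2*s)) := (Nat.mod_add_div e (2*s)).symm
  conv_lhs => rw [h2]
  exact key _ _

lemma coset_eq_cfin (S : Setup q s t n) (i : ℕ) : cosetC q n i = ↑(cfin q s n i) := by
  have hs := S.hs
  ext x
  simp only [cosetC, cfin, Set.mem_setOf_eq, Finset.coe_image, Set.mem_image,
    Finset.mem_coe, Finset.mem_range]
  constructor
  · rintro ⟨j, rfl⟩
    exact ⟨j % (2*s), Nat.mod_lt _ (by omega), (S.mulpow_mod i j).symm⟩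
  · rintro ⟨a, _, rfl⟩
    exact ⟨a, rfl⟩

lemma coset_q_mul (S : Setup q s t n) (i : ℕ) : cosetC q n (q * i) = cosetC q n i := by
  have hs := S.hs
  ext x
  simp only [cosetC, Set.mem_setOf_eq]
  constructor
  · rintro ⟨j, rfl⟩
    exact ⟨j + 1, by rw [pow_succ]; ring_nf⟩
  · rintro ⟨j, rfl⟩
    refine ⟨j + (2*s - 1), ?_⟩
    have h1 : q * i * q ^ (j + (2*s-1)) = i * q ^ (j + 2*s) := by
      have e1 : j + 2*s = (j + (2*s-1)) + 1 := by omega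
      rw [e1, pow_succ]
      ring
    rw [h1]
    have := S.mulpow i j
    unfold Nat.ModEq at this
    omega

lemma coprime_nq (S : Setup q s t n) : Nat.Coprime n q := by
  have h1 := S.n_mod_q
  have hq := S.hq
  have h2 : Nat.gcd n q ∣ 1 := by
    obtain ⟨k, hk⟩ : ∃ k, n = q * k + 1 := ⟨n / q, by have := Nat.div_add_mod n q; omega⟩
    have d1 := Nat.gcd_dvd_left n q
    have d2 : Nat.gcd n q ∣ q * k := (Nat.gcd_dvd_right n q).mul_right k
    have : n - q * k = 1 := by omega
    exact this ▸ Nat.dvd_sub d1 d2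
  exact Nat.eq_one_of_dvd_one h2

lemma coset_elem_pos (S : Setup q s t n) {i : ℕ} (hi1 : 1 ≤ i) (hih : i < q ^ s) (a : ℕ) :
    1 ≤ i * q ^ a % n := by
  have hlt := S.h_lt_n
  rcases Nat.eq_zero_or_pos (i * q ^ a % n) with h | h
  · exfalso
    have hdvd : n ∣ i * q ^ a := Nat.dvd_of_mod_eq_zero h
    have hcop : Nat.Coprime n (q ^ a) := (S.coprime_nq).pow_right a
    have : n ∣ i := (Nat.Coprime.dvd_of_dvd_mul_right hcop hdvd)
    have := Nat.le_of_dvd (by omega) this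
    omega
  · exact h

lemma ndvd_kt1 (S : Setup q s t n) {k : ℕ} (hk : k ≤ q - 2) : ¬ q ∣ (k * t + 1) := by
  have hq := S.hq
  have ht := S.t_mod_q
  obtain ⟨d, hd⟩ : ∃ d, t = q * d + 1 := ⟨t / q, by have := Nat.div_add_mod t q; omega⟩
  intro hdvd
  have h1 : k * t + 1 = q * (k * d) + (k + 1) := by rw [hd]; ring
  have h2 : (k * t + 1) % q = (k+1) % q := by rw [h1, Nat.mul_add_mod]
  have h3 : (k+1) % q = k+1 := Nat.mod_eq_of_lt (by omega)
  obtain ⟨c, hc⟩ := hdvd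
  have h5 : (k * t + 1) % q = 0 := by rw [hc]; exact Nat.mul_mod_right q c
  omega

lemma ndvd_kt (S : Setup q s t n) {k : ℕ} (hk1 : 1 ≤ k) (hk : k ≤ q - 1) : ¬ q ∣ (t * k) := by
  have hq := S.hq
  have ht := S.t_mod_q
  obtain ⟨d, hd⟩ : ∃ d, t = q * d + 1 := ⟨t / q, by have := Nat.div_add_mod t q; omega⟩
  intro hdvd
  have h1 : t * k = q * (d * k) + k := by rw [hd]; ring
  have h2 : (t * k) % q = k % q := by rw [h1, Nat.mul_add_mod]
  have h3 : k % q = k := Nat.mod_eq_of_lt (by omega)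
  obtain ⟨c, hc⟩ := hdvd
  have h5 : (t * k) % q = 0 := by rw [hc]; exact Nat.mul_mod_right q c
  omega

end Setup

def nfin (q s n i : ℕ) : Finset ℕ := (cfin q s n i).image (n - ·)

namespace Setup
variable {q s t n : ℕ}

lemma cfin_mem_bounds (S : Setup q s t n) {i : ℕ} (hi1 : 1 ≤ i) (hih : i < q ^ s)
    {x : ℕ} (hx : x ∈ cfin q s n i) : 1 ≤ x ∧ x < n := by
  simp only [cfin, Finset.mem_image, Finset.mem_range] at hx
  obtain ⟨a, _, rfl⟩ := hx
  exact ⟨S.coset_elem_pos hi1 hih a, Nat.mod_lt _ (by have := S.npos; omega)⟩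

lemma card_nfin (S : Setup q s t n) {i : ℕ} (hi1 : 1 ≤ i) (hih : i < q ^ s) :
    (nfin q s n i).card = (cfin q s n i).card := by
  apply Finset.card_image_of_injOn
  intro x hx y hy hxy
  have h1 := S.cfin_mem_bounds hi1 hih hx
  have h2 := S.cfin_mem_bounds hi1 hih hy
  simp only at hxy
  omega

/-- From equality of two coset elements, same-coset classification. -/
lemma cc_inter (S : Setup q s t n) {i j a b : ℕ} (hi1 : 1 ≤ i) (hih : i < q ^ s)
    (hj1 : 1 ≤ j) (hjh : j < q ^ s) (hqi : ¬ q ∣ i) (hqj : ¬ q ∣ j)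
    (hb : b < 2*s) (heq : i * q ^ a % n = j * q ^ b % n) :
    i = j ∨ ∃ k, 1 ≤ k ∧ k ≤ q - 2 ∧ i = k * t + 1 ∧ j = (q - 1 - k) * t + 1 := by
  have hs := S.hs
  have hm : i * q ^ a ≡ j * q ^ b [MOD n] := heq
  have hm2 : i * q ^ (a + (2*s - b)) ≡ j [MOD n] := by
    have e1 : i * q ^ a * q ^ (2*s - b) = i * q ^ (a + (2*s - b)) := by
      rw [pow_add]; ring
    have e2 : j * q ^ b * q ^ (2*s - b) = j * q ^ (2*s) := by
      rw [mul_assoc, ← pow_add]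
      congr 2
      omega
    calc i * q ^ (a + (2*s-b)) = i * q ^ a * q ^ (2*s - b) := e1.symm
    _ ≡ j * q ^ b * q ^ (2*s - b) [MOD n] := hm.mul_right _
    _ = j * q ^ (2*s) := e2
    _ ≡ j * 1 [MOD n] := S.pow_cycle.mul_left j
    _ = j := mul_one j
  have hm3 : i * q ^ ((a + (2*s - b)) % (2*s)) ≡ j [MOD n] := by
    have := S.mulpow_mod i (a + (2*s - b))
    unfold Nat.ModEq at hm2 ⊢
    omega
  have hc : (a + (2*s - b)) % (2*s) < 2*s := Nat.mod_lt _ (by omega)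
  rcases S.key1 hi1 hih hj1 hjh hqi hqj hc hm3 with ⟨_, h⟩ | ⟨_, h⟩
  · exact Or.inl h
  · exact Or.inr h

/-- From an element of `C_i` equal to a negated element of `C_j`. -/
lemma cn_inter (S : Setup q s t n) {i j a b : ℕ} (hi1 : 1 ≤ i) (hih : i < q ^ s)
    (hj1 : 1 ≤ j) (hjh : j < q ^ s)
    (hb : b < 2*s) (heq : i * q ^ a % n = n - j * q ^ b % n) :
    ∃ k, 1 ≤ k ∧ k ≤ q - 1 ∧ i = t * k ∧ j = t * k := by
  have hs := S.hs
  have hnp := S.npos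
  have hy1 : 1 ≤ j * q ^ b % n := S.coset_elem_pos hj1 hjh b
  have hyn : j * q ^ b % n < n := Nat.mod_lt _ (by omega)
  have hsum : (i * q ^ a + j * q ^ b) % n = 0 := by
    have h1 : (i * q ^ a + j * q ^ b) % n = (i * q ^ a % n + j * q ^ b % n) % n :=
      Nat.add_mod _ _ _
    rw [h1, heq]
    have h2 : n - j * q ^ b % n + j * q ^ b % n = n := by omega
    rw [h2, Nat.mod_self]
  have hdvd : n ∣ i * q ^ a + j * q ^ b := Nat.dvd_of_mod_eq_zero hsum
  have hdvd2 : n ∣ i * q ^ (a + (2*s - b)) + j * q ^ (2*s) := by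
    have e1 : (i * q ^ a + j * q ^ b) * q ^ (2*s - b)
        = i * q ^ (a + (2*s - b)) + j * (q ^ b * q ^ (2*s - b)) := by
      rw [pow_add]; ring
    have e2 : q ^ b * q ^ (2*s - b) = q ^ (2*s) := by rw [← pow_add]; congr 1; omega
    rw [← e2]
    exact e1 ▸ hdvd.mul_right _
  have hm : i * q ^ ((a + (2*s - b)) % (2*s)) + j ≡ 0 [MOD n] := by
    have h3 : i * q ^ ((a + (2*s - b)) % (2*s)) ≡ i * q ^ (a + (2*s - b)) [MOD n] :=
      (S.mulpow_mod i (a + (2*s - b))).symm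
    have h4 : j ≡ j * q ^ (2*s) [MOD n] := by
      calc j = j * 1 := (mul_one j).symm
      _ ≡ j * q ^ (2*s) [MOD n] := S.pow_cycle.symm.mul_left j
    calc i * q ^ ((a + (2*s - b)) % (2*s)) + j
        ≡ i * q ^ (a + (2*s - b)) + j * q ^ (2*s) [MOD n] := h3.add h4
    _ ≡ 0 [MOD n] := (Nat.modEq_zero_iff_dvd).2 hdvd2
  have hc : (a + (2*s - b)) % (2*s) < 2*s := Nat.mod_lt _ (by omega)
  obtain ⟨_, k, hk⟩ := S.key2 hi1 hih hj1 hjh hc ((Nat.modEq_zero_iff_dvd).1 hm)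
  exact ⟨k, hk⟩

/-- Full-size coset. -/
lemma card_cfin_full (S : Setup q s t n) {i : ℕ} (hi1 : 1 ≤ i) (hih : i < q ^ s)
    (hqi : ¬ q ∣ i) (hmid : ¬ (q % 2 = 1 ∧ i = ((q-1)/2) * t + 1)) :
    (cfin q s n i).card = 2 * s := by
  have hs := S.hs
  have htl := S.tlb
  rw [cfin, Finset.card_image_of_injOn, Finset.card_range]
  have key : ∀ a b, a < b → b < 2*s → i * q ^ a % n = i * q ^ b % n → False := by
    intro a b hlt hb hab
    have hm : i * q ^ (b - a) ≡ i [MOD n] := by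
      have e1 : i * q ^ b = i * q ^ (b - a) * q ^ a := by rw [mul_assoc, ← pow_add]; congr 2; omega
      have hm0 : i * q ^ (b - a) * q ^ a ≡ i * q ^ a [MOD n] := by
        rw [← e1]; exact (Nat.ModEq.symm hab : _ ≡ _ [MOD n])
      have hm1 : i * q ^ (b - a) * q ^ a * q ^ (2*s - a) ≡ i * q ^ a * q ^ (2*s - a) [MOD n] :=
        hm0.mul_right _
      have e2 : i * q ^ (b - a) * q ^ a * q ^ (2*s - a) = (i * q ^ (b-a)) * q ^ (2*s) := by
        rw [mul_assoc, ← pow_add]; congr 2; omega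
      have e3 : i * q ^ a * q ^ (2*s - a) = i * q ^ (2*s) := by
        rw [mul_assoc, ← pow_add]; congr 2; omega
      calc i * q ^ (b-a) = (i * q ^ (b-a)) * 1 := (mul_one _).symm
      _ ≡ (i * q ^ (b-a)) * q ^ (2*s) [MOD n] := S.pow_cycle.symm.mul_left _
      _ = i * q ^ (b - a) * q ^ a * q ^ (2*s - a) := e2.symm
      _ ≡ i * q ^ a * q ^ (2*s - a) [MOD n] := hm1
      _ = i * q ^ (2*s) := e3
      _ ≡ i * 1 [MOD n] := S.pow_cycle.mul_left i
      _ = i := mul_one i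
    rcases S.key1 hi1 hih hi1 hih hqi hqi (by omega : b - a < 2*s) hm with
      ⟨h0, _⟩ | ⟨_, k, hk1, hk2, hk3, hk4⟩
    · omega
    · apply hmid
      have heqt : k * t = (q-1-k) * t := by
        have h6 := hk3.symm.trans hk4
        omega
      have hkk : k = q - 1 - k := Nat.eq_of_mul_eq_mul_right (by omega : 0 < t) heqt
      have hq2 : q % 2 = 1 ∧ k = (q-1)/2 := by omega
      exact ⟨hq2.1, by rw [hk3, hq2.2]⟩
  intro a ha b hb hab
  simp only [Finset.mem_coe, Finset.mem_range] at ha hb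
  simp only at hab
  rcases Nat.lt_trichotomy a b with h | h | h
  · exact absurd (key a b h hb hab) (by simp)
  · exact h
  · exact absurd (key b a h ha hab.symm) (by simp)

end Setup

namespace Setup
variable {q s t n : ℕ}

lemma shift_subset (S : Setup q s t n) {i j : ℕ} (hmod : i * q ^ s % n = j % n) :
    cfin q s n j ⊆ cfin q s n i := by
  have hs := S.hs
  intro x hx
  simp only [cfin, Finset.mem_image, Finset.mem_range] at hx ⊢
  obtain ⟨a, ha, rfl⟩ := hx
  refine ⟨(s + a) % (2*s), Nat.mod_lt _ (by omega), ?_⟩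
  have h1 : i * q ^ (s + a) ≡ j * q ^ a [MOD n] := by
    have h2 : i * q ^ s ≡ j [MOD n] := hmod
    have h3 := h2.mul_right (q ^ a)
    have e1 : i * q ^ s * q ^ a = i * q ^ (s + a) := by rw [mul_assoc, ← pow_add]
    rwa [e1] at h3
  have h4 := S.mulpow_mod i (s + a)
  unfold Nat.ModEq at h1
  omega

lemma mirror_id (S : Setup q s t n) {k : ℕ} (hk : k ≤ q - 1) :
    (k * t + 1) * q ^ s = ((q - 1 - k) * t + 1) + k * n := by
  have ht := S.ht
  have eA : (k*t+1) * q ^ s = k*(q^s*t) + q^s := by ring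
  have eB : k*n = k*(q^s*t) + k*t := by rw [S.hn]; ring
  have eC : (q-1-k)*t = (q-1)*t - k*t := Nat.sub_mul _ _ _
  have eD : k*t ≤ (q-1)*t := Nat.mul_le_mul_right _ hk
  have hp := S.hpos
  omega

lemma mirror_mod (S : Setup q s t n) {k : ℕ} (hk : k ≤ q - 1) :
    (k * t + 1) * q ^ s % n = ((q - 1 - k) * t + 1) % n := by
  rw [S.mirror_id hk, Nat.add_mul_mod_self_right]

lemma cfin_mirror (S : Setup q s t n) {k : ℕ} (hk1 : 1 ≤ k) (hk2 : k ≤ q - 2) :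
    cfin q s n (k * t + 1) = cfin q s n ((q - 1 - k) * t + 1) := by
  have hq := S.hq
  apply Finset.Subset.antisymm
  · have h1 : ((q-1-k) * t + 1) * q ^ s % n = (k * t + 1) % n := by
      have := S.mirror_mod (k := q - 1 - k) (by omega)
      have e : q - 1 - (q - 1 - k) = k := by omega
      rwa [e] at this
    exact S.shift_subset h1
  · exact S.shift_subset (S.mirror_mod (by omega))

lemma selfneg_pair (S : Setup q s t n) {k : ℕ} (hk1 : 1 ≤ k) (hkq : k ≤ q - 1)
    (hlt : t * k < q ^ s) (a : ℕ) :
    n - t * k * q ^ a % n = t * k * q ^ (s + a) % n := by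
  have hs := S.hs
  have hnp := S.npos
  have htl := S.tlb
  have hq := S.hq
  have hid : t * k * q ^ s + t * k = k * n := by rw [S.hn]; ring
  have hdvd : n ∣ t * k * q ^ (s + a) + t * k * q ^ a := by
    have h1 : (t * k * q ^ s + t * k) * q ^ a = t * k * q ^ (s+a) + t * k * q ^ a := by
      rw [pow_add]; ring
    rw [← h1, hid]
    exact (dvd_mul_left n k).mul_right _
  have hx1 : 1 ≤ t * k * q ^ a % n := S.coset_elem_pos (by exact Nat.mul_pos (by omega) (by omega)) hlt a
  have hxn : t * k * q ^ a % n < n := Nat.mod_lt _ (by omega)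
  have hy1 : 1 ≤ t * k * q ^ (s+a) % n := S.coset_elem_pos (by exact Nat.mul_pos (by omega) (by omega)) hlt _
  have hyn : t * k * q ^ (s+a) % n < n := Nat.mod_lt _ (by omega)
  have hsum0 : (t * k * q ^ (s+a) + t * k * q ^ a) % n = 0 := by
    obtain ⟨c, hc⟩ := hdvd; rw [hc]; exact Nat.mul_mod_right n c
  have hmm : (t * k * q ^ (s+a) % n + t * k * q ^ a % n) % n = 0 := by
    rw [← Nat.add_mod]; exact hsum0
  obtain ⟨d, hd⟩ := Nat.dvd_of_mod_eq_zero hmm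
  have hne0 : d ≠ 0 := by rintro rfl; rw [Nat.mul_zero] at hd; omega
  have hlt2 : d < 2 := by
    by_contra h
    push_neg at h
    have := Nat.mul_le_mul_left n h
    omega
  have hd1 : d = 1 := by omega
  rw [hd1, Nat.mul_one] at hd
  omega

end Setup

namespace Setup
variable {q s t n : ℕ}

lemma mem_cfin_exp (S : Setup q s t n) {i : ℕ} (e : ℕ) :
    i * q ^ e % n ∈ cfin q s n i := by
  have hs := S.hs
  simp only [cfin, Finset.mem_image, Finset.mem_range]
  exact ⟨e % (2*s), Nat.mod_lt _ (by omega), (S.mulpow_mod i e).symm⟩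

lemma nfin_eq_cfin_tk (S : Setup q s t n) {k : ℕ} (hk1 : 1 ≤ k) (hkq : k ≤ q - 1)
    (hlt : t * k < q ^ s) : nfin q s n (t * k) = cfin q s n (t * k) := by
  have hs := S.hs
  apply Finset.Subset.antisymm
  · intro x hx
    simp only [nfin, cfin, Finset.mem_image, Finset.mem_range] at hx
    obtain ⟨y, ⟨a, ha, rfl⟩, rfl⟩ := hx
    rw [S.selfneg_pair hk1 hkq hlt a]
    exact S.mem_cfin_exp _
  · intro x hx
    simp only [cfin, Finset.mem_image, Finset.mem_range] at hx
    obtain ⟨a, ha, rfl⟩ := hx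
    simp only [nfin, Finset.mem_image]
    refine ⟨t * k * q ^ (s + a) % n, S.mem_cfin_exp _, ?_⟩
    rw [S.selfneg_pair hk1 hkq hlt (s + a)]
    have h1 : t * k * q ^ (s + (s + a)) % n = t * k * q ^ a % n := by
      have e1 : s + (s + a) = a + 2 * s := by ring
      rw [e1]
      have := S.mulpow (t * k) a
      unfold Nat.ModEq at this
      omega
    exact h1

lemma mid_lt (S : Setup q s t n) (hodd : q % 2 = 1) : ((q-1)/2) * t + 1 < q ^ s := by
  have hq := S.hq
  have htl := S.tlb
  have ht := S.ht
  have h1 : ((q-1)/2) * t ≤ (q-2) * t := Nat.mul_le_mul_right _ (by omega)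
  have h2 : (q-2) * t + t = (q-1) * t := by
    have e : (q-2)*t = (q-1)*t - 1*t := by have h9 : q - 1 - 1 = q - 2 := by omega
                                           rw [← Nat.sub_mul, h9]
    have e2 : 1*t ≤ (q-1)*t := Nat.mul_le_mul_right _ (by omega)
    omega
  omega

lemma cfin_mid_card (S : Setup q s t n) (hodd : q % 2 = 1) :
    (cfin q s n (((q-1)/2) * t + 1)).card = s := by
  have hs := S.hs
  have hq := S.hq
  have htl := S.tlb
  have hmlt := S.mid_lt hodd
  have hmid_mod : (((q-1)/2) * t + 1) * q ^ s % n = (((q-1)/2) * t + 1) % n := by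
    have h1 := S.mirror_mod (k := (q-1)/2) (by omega)
    have e : q - 1 - (q-1)/2 = (q-1)/2 := by omega
    rwa [e] at h1
  set i := ((q-1)/2) * t + 1 with hi
  have hqi : ¬ q ∣ i := S.ndvd_kt1 (by omega)
  -- image over range s suffices
  have himg : cfin q s n i = (Finset.range s).image (fun a => i * q ^ a % n) := by
    apply Finset.Subset.antisymm
    · intro x hx
      simp only [cfin, Finset.mem_image, Finset.mem_range] at hx ⊢
      obtain ⟨a, ha, rfl⟩ := hx
      rcases Nat.lt_or_ge a s with h | h
      · exact ⟨a, h, rfl⟩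
      · refine ⟨a - s, by omega, ?_⟩
        have h1 : i * q ^ a ≡ i * q ^ (a - s) [MOD n] := by
          have h2 : i * q ^ s ≡ i [MOD n] := hmid_mod
          have h3 := h2.mul_right (q ^ (a - s))
          have e1 : i * q ^ s * q ^ (a - s) = i * q ^ a := by
            rw [mul_assoc, ← pow_add]; congr 2; omega
          rwa [e1] at h3
        exact (h1 : _ % n = _ % n).symm ▸ rfl
    · intro x hx
      simp only [cfin, Finset.mem_image, Finset.mem_range] at hx ⊢
      obtain ⟨a, ha, rfl⟩ := hx
      exact ⟨a, by omega, rfl⟩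
  rw [himg, Finset.card_image_of_injOn, Finset.card_range]
  intro a ha b hb hab
  simp only [Finset.mem_coe, Finset.mem_range] at ha hb
  simp only at hab
  have key : ∀ a b, a < b → b < s → i * q ^ a % n = i * q ^ b % n → False := by
    intro a b hlt hb hab
    have hm : i * q ^ (b - a) ≡ i [MOD n] := by
      have e1 : i * q ^ b = i * q ^ (b - a) * q ^ a := by rw [mul_assoc, ← pow_add]; congr 2; omega
      have hm0 : i * q ^ (b - a) * q ^ a ≡ i * q ^ a [MOD n] := by
        rw [← e1]; exact (Nat.ModEq.symm hab : _ ≡ _ [MOD n])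
      have hm1 : i * q ^ (b - a) * q ^ a * q ^ (2*s - a) ≡ i * q ^ a * q ^ (2*s - a) [MOD n] :=
        hm0.mul_right _
      have e2 : i * q ^ (b - a) * q ^ a * q ^ (2*s - a) = (i * q ^ (b-a)) * q ^ (2*s) := by
        rw [mul_assoc, ← pow_add]; congr 2; omega
      have e3 : i * q ^ a * q ^ (2*s - a) = i * q ^ (2*s) := by
        rw [mul_assoc, ← pow_add]; congr 2; omega
      calc i * q ^ (b-a) = (i * q ^ (b-a)) * 1 := (mul_one _).symm
      _ ≡ (i * q ^ (b-a)) * q ^ (2*s) [MOD n] := S.pow_cycle.symm.mul_left _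
      _ = i * q ^ (b - a) * q ^ a * q ^ (2*s - a) := e2.symm
      _ ≡ i * q ^ a * q ^ (2*s - a) [MOD n] := hm1
      _ = i * q ^ (2*s) := e3
      _ ≡ i * 1 [MOD n] := S.pow_cycle.mul_left i
      _ = i := mul_one i
    rcases S.key1 (by omega) hmlt (by omega) hmlt hqi hqi (by omega : b - a < 2*s) hm with
      ⟨h0, _⟩ | ⟨h0, _⟩
    · omega
    · omega
  rcases Nat.lt_trichotomy a b with h | h | h
  · exact absurd (key a b h hb hab) (by simp)
  · exact h
  · exact absurd (key b a h ha hab.symm) (by simp)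

end Setup

namespace Setup
variable {q s t n : ℕ}

set_option maxHeartbeats 1000000 in
lemma main (S : Setup q s t n) (δ : ℕ) (hδ : 2 ≤ δ) (hδ' : δ ≤ q ^ s) :
    ∃ C : ℕ,
      (({0} : Set ℕ) ∪ ⋃ i ∈ Set.Icc 1 (δ - 1),
          (cosetC q n i ∪ (n - ·) '' cosetC q n i)).ncard
        = 1 + ((δ-1)/t + (if q % 2 = 1 ∧ (q-1)/2 ≤ (δ-2)/t then 1 else 0)) * (2*s)
            + (C - ((δ-1)/t + (if q % 2 = 1 ∧ (q-1)/2 ≤ (δ-2)/t then 1 else 0))) * (4*s)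
      ∧ ((δ-1)/t + (if q % 2 = 1 ∧ (q-1)/2 ≤ (δ-2)/t then 1 else 0)) ≤ C
      ∧ C + ((δ-2)/t + 1 - ((q-1)/2 + 1)) = (δ-1) - (δ-1)/q := by
  classical
  have hq := S.hq
  have hs := S.hs
  have htl := S.tlb
  have ht := S.ht
  have hnp := S.npos
  have hhn := S.h_lt_n
  have hp := S.hpos
  have htpos : 0 < t := by omega
  have hδh : δ - 1 < q ^ s := by omega
  -- abbreviations
  set ε : ℕ := (δ-2)/t with hεdef
  set εb : ℕ := (δ-1)/t with hεbdef
  set lb : ℕ := (q-1)/2 + 1 with hlbdef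
  have hεub : ε ≤ q - 2 := by
    by_contra hc
    have h1 : (q-1) * t ≤ ε * t := Nat.mul_le_mul_right _ (by omega)
    have h2 : ε * t ≤ δ - 2 := Nat.div_mul_le_self _ _
    omega
  have hεbub : εb ≤ q - 1 := by
    by_contra hc
    have h1 : q * t ≤ εb * t := Nat.mul_le_mul_right _ (by omega)
    have h2 : εb * t ≤ δ - 1 := Nat.div_mul_le_self _ _
    have h3 : ((q-1)+1) * t = (q-1)*t + 1*t := add_mul _ _ _
    have h4 : (q-1)+1 = q := by omega
    rw [h4] at h3
    omega
  have hεεb : ε ≤ εb := Nat.div_le_div_right (by omega)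
  -- the index sets
  set I : Finset ℕ := (Finset.Icc 1 (δ-1)).filter (fun i => ¬ q ∣ i) with hIdef
  set B : Finset ℕ := (Finset.Icc lb ε).image (fun k => k * t + 1) with hBdef
  set I' : Finset ℕ := I \ B with hI'def
  set D : ℕ → Finset ℕ := fun i => cfin q s n i ∪ nfin q s n i with hDdef
  -- membership facts
  have hImem : ∀ i, i ∈ I ↔ (1 ≤ i ∧ i ≤ δ - 1 ∧ ¬ q ∣ i) := by
    intro i; simp [hIdef, Finset.mem_filter, Finset.mem_Icc, and_assoc]
  have hBmem : ∀ i, i ∈ B ↔ ∃ k, lb ≤ k ∧ k ≤ ε ∧ i = k * t + 1 := by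
    intro i
    simp only [hBdef, Finset.mem_image, Finset.mem_Icc]
    constructor
    · rintro ⟨k, ⟨h1, h2⟩, rfl⟩; exact ⟨k, h1, h2, rfl⟩
    · rintro ⟨k, h1, h2, rfl⟩; exact ⟨k, ⟨h1, h2⟩, rfl⟩
  have hI'bound : ∀ i ∈ I', 1 ≤ i ∧ i < q ^ s ∧ ¬ q ∣ i ∧ i ≤ δ - 1 := by
    intro i hi
    have := (hImem i).1 (Finset.mem_sdiff.1 hi).1
    exact ⟨this.1, by omega, this.2.2, this.2.1⟩
  -- t-multiples are not of form k*t+1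
  have htform : ∀ k c : ℕ, t * k = c * t + 1 → False := by
    intro k c hkc
    rcases le_or_gt k c with h | h
    · have : t * k ≤ t * c := Nat.mul_le_mul_left _ h
      have e : t * c = c * t := mul_comm _ _
      omega
    · have : t * (c+1) ≤ t * k := Nat.mul_le_mul_left _ h
      have e : t * (c+1) = c * t + t := by ring
      omega
  -- mirror form uniqueness
  have hktinj : ∀ k c : ℕ, k * t + 1 = c * t + 1 → k = c := by
    intro k c h
    exact Nat.eq_of_mul_eq_mul_right htpos (by omega)
  -- set equality
  have hset : (({0} : Set ℕ) ∪ ⋃ i ∈ Set.Icc 1 (δ - 1),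
      (cosetC q n i ∪ (n - ·) '' cosetC q n i))
      = ↑(insert 0 (I'.biUnion D)) := by
    have hcosD : ∀ i, 1 ≤ i → i < q ^ s →
        cosetC q n i ∪ (n - ·) '' cosetC q n i = ↑(D i) := by
      intro i h1 h2
      rw [hDdef]
      simp only
      rw [Finset.coe_union, S.coset_eq_cfin, nfin, Finset.coe_image]
    have hstrip : ∀ i, 1 ≤ i → i ≤ δ - 1 → ∃ j ∈ I, cosetC q n i = cosetC q n j := by
      intro i
      induction i using Nat.strong_induction_on with
      | _ i ih =>
        intro h1 h2
        by_cases hqi : q ∣ i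
        · obtain ⟨i', rfl⟩ := hqi
          have hi'1 : 1 ≤ i' := by
            rcases Nat.eq_zero_or_pos i' with rfl | h
            · simp at h1
            · exact h
          have hi'lt : i' < q * i' := lt_mul_left hi'1 (by omega)
          obtain ⟨j, hj, he⟩ := ih i' hi'lt hi'1 (by omega)
          exact ⟨j, hj, (S.coset_q_mul i').trans he⟩
        · exact ⟨i, (hImem i).2 ⟨h1, h2, hqi⟩, rfl⟩
    have hred : ∀ i, 1 ≤ i → i ≤ δ - 1 → ∃ j ∈ I', cosetC q n i = cosetC q n j := by
      intro i h1 h2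
      obtain ⟨j, hjI, hej⟩ := hstrip i h1 h2
      by_cases hjB : j ∈ B
      · obtain ⟨k, hk1, hk2, rfl⟩ := (hBmem j).1 hjB
        have hkq2 : k ≤ q - 2 := le_trans hk2 hεub
        have hklb : 1 ≤ k := by omega
        have hcos : cosetC q n (k*t+1) = cosetC q n ((q - 1 - k) * t + 1) := by
          rw [S.coset_eq_cfin, S.coset_eq_cfin, S.cfin_mirror hklb hkq2]
        have hpI' : (q - 1 - k) * t + 1 ∈ I' := by
          refine Finset.mem_sdiff.2 ⟨(hImem _).2 ⟨by omega, ?_, S.ndvd_kt1 (by omega)⟩, ?_⟩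
          · have hle : (q-1-k) ≤ k := by omega
            have h5 : (q-1-k) * t ≤ k * t := Nat.mul_le_mul_right _ hle
            have hkt : k * t ≤ ε * t := Nat.mul_le_mul_right _ hk2
            have hεt : ε * t ≤ δ - 2 := Nat.div_mul_le_self _ _
            omega
          · intro hpB
            obtain ⟨k', hk1', hk2', hpe⟩ := (hBmem _).1 hpB
            have : k' = q - 1 - k := hktinj _ _ hpe.symm
            omega
        exact ⟨_, hpI', hej.trans hcos⟩
      · exact ⟨j, Finset.mem_sdiff.2 ⟨hjI, hjB⟩, hej⟩
    ext x
    simp only [Set.mem_union, Set.mem_singleton_iff, Set.mem_iUnion, Set.mem_Icc,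
      Finset.coe_insert, Set.mem_insert_iff, Finset.mem_coe, Finset.mem_biUnion]
    constructor
    · rintro (rfl | ⟨i, ⟨hi1, hi2⟩, hx⟩)
      · exact Or.inl rfl
      · right
        obtain ⟨j, hjI', hej⟩ := hred i hi1 hi2
        have hjb := hI'bound j hjI'
        refine ⟨j, hjI', ?_⟩
        have hc := hcosD j hjb.1 hjb.2.1
        rw [hej] at hx
        rw [← Finset.mem_coe, ← hc]
        exact hx
    · rintro (rfl | ⟨j, hjI', hx⟩)
      · exact Or.inl rfl
      · right
        have hjb := hI'bound j hjI'
        refine ⟨j, ⟨hjb.1, hjb.2.2.2⟩, ?_⟩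
        rw [← Finset.mem_coe, ← hcosD j hjb.1 hjb.2.1] at hx
        exact hx
  -- disjointness
  have hcc : ∀ x i' j', i' ∈ I' → j' ∈ I' → i' ≠ j' → x ∈ cfin q s n i' →
      x ∈ cfin q s n j' → False := by
    intro x i' j' hi' hj' hne' hx1 hx2
    have hib' := hI'bound i' hi'
    have hjb' := hI'bound j' hj'
    simp only [cfin, Finset.mem_image, Finset.mem_range] at hx1 hx2
    obtain ⟨a, ha, rfl⟩ := hx1
    obtain ⟨b, hb, heq⟩ := hx2
    rcases S.cc_inter hib'.1 hib'.2.1 hjb'.1 hjb'.2.1 hib'.2.2.1 hjb'.2.2.1 hb heq.symm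
      with h | ⟨k, hk1, hk2, hki, hkj⟩
    · exact hne' h
    · have hkile : k * t ≤ δ - 2 := by
        have h5 := hib'.2.2.2
        rw [hki] at h5
        omega
      have hkjle : (q-1-k) * t ≤ δ - 2 := by
        have h5 := hjb'.2.2.2
        rw [hkj] at h5
        omega
      have hkε : k ≤ ε := by
        rw [hεdef]
        exact (Nat.le_div_iff_mul_le htpos).2 hkile
      have hkε' : q - 1 - k ≤ ε := by
        rw [hεdef]
        exact (Nat.le_div_iff_mul_le htpos).2 hkjle
      have hkk : k ≠ q - 1 - k := by
        intro h
        apply hne'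
        rw [hki, hkj]
        exact congrArg (fun z => z * t + 1) h
      rcases (show lb ≤ k ∨ lb ≤ q - 1 - k by omega) with h | h
      · exact absurd ((hBmem i').2 ⟨k, h, hkε, hki⟩) (Finset.mem_sdiff.1 hi').2
      · exact absurd ((hBmem j').2 ⟨q-1-k, h, hkε', hkj⟩) (Finset.mem_sdiff.1 hj').2
  have hcn : ∀ x i' j', 1 ≤ i' → i' < q ^ s → 1 ≤ j' → j' < q ^ s →
      x ∈ cfin q s n i' → x ∈ nfin q s n j' → ∃ k, 1 ≤ k ∧ i' = t * k ∧ j' = t * k := by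
    intro x i' j' h1 h2 h3 h4 hx1 hx2
    simp only [cfin, nfin, Finset.mem_image, Finset.mem_range] at hx1 hx2
    obtain ⟨a, ha, rfl⟩ := hx1
    obtain ⟨y, ⟨b, hb, rfl⟩, heq⟩ := hx2
    obtain ⟨k, hk1, hk2, hki, hkj⟩ := S.cn_inter h1 h2 h3 h4 hb heq.symm
    exact ⟨k, hk1, hki, hkj⟩
  have hdisj : ∀ i ∈ I', ∀ j ∈ I', i ≠ j → Disjoint (D i) (D j) := by
    intro i hi j hj hne
    have hib := hI'bound i hi
    have hjb := hI'bound j hj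
    rw [Finset.disjoint_left]
    intro x hxi hxj
    rw [hDdef] at hxi hxj
    simp only [Finset.mem_union] at hxi hxj
    rcases hxi with hxi | hxi <;> rcases hxj with hxj | hxj
    · exact hcc x i j hi hj hne hxi hxj
    · obtain ⟨k, _, hk2, hk3⟩ := hcn x i j hib.1 hib.2.1 hjb.1 hjb.2.1 hxi hxj
      exact hne (hk2.trans hk3.symm)
    · obtain ⟨k, _, hk2, hk3⟩ := hcn x j i hjb.1 hjb.2.1 hib.1 hib.2.1 hxj hxi
      exact hne (hk3.trans hk2.symm)
    · simp only [nfin, Finset.mem_image] at hxi hxj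
      obtain ⟨y, hy, hyx⟩ := hxi
      obtain ⟨z, hz, hzx⟩ := hxj
      have hby := S.cfin_mem_bounds hib.1 hib.2.1 hy
      have hbz := S.cfin_mem_bounds hjb.1 hjb.2.1 hz
      have : y = z := by omega
      subst this
      exact hcc y i j hi hj hne hy hz
  -- zero not in any D
  have h0D : 0 ∉ I'.biUnion D := by
    intro h0
    simp only [Finset.mem_biUnion] at h0
    obtain ⟨i, hi, hmem⟩ := h0
    have hib := hI'bound i hi
    rw [hDdef] at hmem
    simp only [Finset.mem_union] at hmem
    rcases hmem with h | h
    · have := S.cfin_mem_bounds hib.1 hib.2.1 h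
      omega
    · simp only [nfin, Finset.mem_image] at h
      obtain ⟨y, hy, hy0⟩ := h
      have := S.cfin_mem_bounds hib.1 hib.2.1 hy
      omega
  -- cardinality of each D i
  have hDcard : ∀ i ∈ I', (D i).card =
      if (t ∣ i ∨ (q % 2 = 1 ∧ i = ((q-1)/2) * t + 1)) then 2*s else 4*s := by
    have hDisjCN : ∀ i, 1 ≤ i → i < q ^ s → ¬ t ∣ i →
        Disjoint (cfin q s n i) (nfin q s n i) := by
      intro i h1 h2 hti
      rw [Finset.disjoint_left]
      intro x hx1 hx2
      obtain ⟨k, _, hk2, _⟩ := hcn x i i h1 h2 h1 h2 hx1 hx2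
      exact hti ⟨k, hk2⟩
    intro i hi
    have hib := hI'bound i hi
    by_cases hti : t ∣ i
    · obtain ⟨k, rfl⟩ := hti
      have hk1 : 1 ≤ k := by
        rcases Nat.eq_zero_or_pos k with rfl | h
        · exfalso; have := hib.1; simp at this
        · exact h
      have hkq : k ≤ q - 1 := by
        by_contra hc
        have h5 : t * q ≤ t * k := Nat.mul_le_mul_left _ (by omega)
        have h6 : ((q-1)+1) * t = (q-1)*t + 1*t := add_mul _ _ _
        have h7 : (q-1)+1 = q := by omega
        rw [h7] at h6
        have h8 : q * t = t * q := mul_comm _ _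
        have h9 := hib.2.2.2
        omega
      rw [if_pos (Or.inl ⟨k, rfl⟩)]
      have hnc := S.nfin_eq_cfin_tk hk1 hkq hib.2.1
      rw [hDdef]
      simp only
      rw [hnc, Finset.union_self]
      exact S.card_cfin_full hib.1 hib.2.1 hib.2.2.1 (fun hmidc => htform k _ hmidc.2)
    · have hcardn := S.card_nfin hib.1 hib.2.1
      have hdcn := hDisjCN i hib.1 hib.2.1 hti
      by_cases hmi : q % 2 = 1 ∧ i = ((q-1)/2) * t + 1
      · rw [if_pos (Or.inr hmi)]
        rw [hDdef]
        simp only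
        rw [Finset.card_union_of_disjoint hdcn, hcardn]
        obtain ⟨hodd, rfl⟩ := hmi
        rw [S.cfin_mid_card hodd]
        omega
      · rw [if_neg (fun h => h.elim hti hmi)]
        rw [hDdef]
        simp only
        rw [Finset.card_union_of_disjoint hdcn, hcardn,
          S.card_cfin_full hib.1 hib.2.1 hib.2.2.1 hmi]
        omega
  -- special subset count
  have hPcard : (I'.filter (fun i => t ∣ i ∨ (q % 2 = 1 ∧ i = ((q-1)/2) * t + 1))).card
      = εb + (if q % 2 = 1 ∧ (q-1)/2 ≤ ε then 1 else 0) := by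
    have hinj_tk : Function.Injective (fun k => t * k) := by
      intro a b h
      exact Nat.eq_of_mul_eq_mul_left htpos h
    have hfilter : I'.filter (fun i => t ∣ i ∨ (q % 2 = 1 ∧ i = ((q-1)/2) * t + 1))
        = (Finset.Icc 1 εb).image (fun k => t * k)
          ∪ (if q % 2 = 1 ∧ (q-1)/2 ≤ ε then {((q-1)/2)*t+1} else ∅) := by
      ext i
      simp only [Finset.mem_filter, Finset.mem_union, Finset.mem_image, Finset.mem_Icc]
      constructor
      · rintro ⟨hiI', hdvd | ⟨hodd, rfl⟩⟩
        · obtain ⟨k, rfl⟩ := hdvd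
          have hib := hI'bound _ hiI'
          have hk1 : 1 ≤ k := by
            rcases Nat.eq_zero_or_pos k with rfl | h
            · exfalso; have := hib.1; simp at this
            · exact h
          left
          refine ⟨k, ⟨hk1, ?_⟩, rfl⟩
          rw [hεbdef]
          refine (Nat.le_div_iff_mul_le htpos).2 ?_
          have h5 := hib.2.2.2
          have h6 : k * t = t * k := mul_comm _ _
          omega
        · have hib := hI'bound _ hiI'
          have hcond : (q-1)/2 ≤ ε := by
            have h5 := hib.2.2.2
            rw [hεdef]
            exact (Nat.le_div_iff_mul_le htpos).2 (by omega)
          right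
          rw [if_pos ⟨hodd, hcond⟩]
          simp
      · rintro (⟨k, ⟨hk1, hk2⟩, rfl⟩ | hmem)
        · have hkq : k ≤ q - 1 := by rw [hεbdef] at hk2; omega
          have hkt : k * t ≤ δ - 1 := by
            rw [hεbdef] at hk2
            exact (Nat.le_div_iff_mul_le htpos).1 hk2
          have h6 : k * t = t * k := mul_comm _ _
          constructor
          · refine Finset.mem_sdiff.2 ⟨(hImem _).2 ⟨Nat.mul_pos htpos (by omega), by omega,
              S.ndvd_kt hk1 hkq⟩, ?_⟩
            intro hB
            obtain ⟨k', _, _, he⟩ := (hBmem _).1 hB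
            exact htform k k' he
          · exact Or.inl ⟨k, rfl⟩
        · by_cases hcond : q % 2 = 1 ∧ (q-1)/2 ≤ ε
          · rw [if_pos hcond] at hmem
            simp only [Finset.mem_singleton] at hmem
            subst hmem
            have hqodd3 : 3 ≤ q := by omega
            have hmt : ((q-1)/2) * t ≤ δ - 2 := by
              have h5 : ((q-1)/2) * t ≤ ε * t := Nat.mul_le_mul_right _ hcond.2
              have h6 : ε * t ≤ δ - 2 := by rw [hεdef]; exact Nat.div_mul_le_self _ _
              omega
            constructor
            · refine Finset.mem_sdiff.2 ⟨(hImem _).2 ⟨by omega, by omega,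
                S.ndvd_kt1 (by omega)⟩, ?_⟩
              intro hB
              obtain ⟨k', hk1', _, he⟩ := (hBmem _).1 hB
              have : k' = (q-1)/2 := hktinj _ _ he.symm
              omega
            · exact Or.inr ⟨hcond.1, rfl⟩
          · rw [if_neg hcond] at hmem
            simp at hmem
    rw [hfilter]
    have hdisjAM : Disjoint ((Finset.Icc 1 εb).image (fun k => t * k))
        (if q % 2 = 1 ∧ (q-1)/2 ≤ ε then ({((q-1)/2)*t+1} : Finset ℕ) else ∅) := by
      rw [Finset.disjoint_left]
      intro x hx1 hx2
      simp only [Finset.mem_image, Finset.mem_Icc] at hx1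
      obtain ⟨k, _, rfl⟩ := hx1
      by_cases hcond : q % 2 = 1 ∧ (q-1)/2 ≤ ε
      · rw [if_pos hcond] at hx2
        simp only [Finset.mem_singleton] at hx2
        exact htform k _ hx2
      · rw [if_neg hcond] at hx2
        simp at hx2
    rw [Finset.card_union_of_disjoint hdisjAM,
      Finset.card_image_of_injective _ hinj_tk, Nat.card_Icc]
    by_cases hcond : q % 2 = 1 ∧ (q-1)/2 ≤ ε
    · rw [if_pos hcond, if_pos hcond]
      simp
    · rw [if_neg hcond, if_neg hcond]
      simp
  -- cardinalities of I and B
  have hIcard : I.card = (δ-1) - (δ-1)/q := by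
    have h1 : Finset.Icc 1 (δ-1) = Finset.Ioc 0 (δ-1) := Finset.Icc_add_one_left_eq_Ioc 0 (δ-1)
    have h2 : ((Finset.Icc 1 (δ-1)).filter (fun i => q ∣ i)).card = (δ-1) / q := by
      rw [h1]
      exact Nat.Ioc_filter_dvd_card_eq_div (δ-1) q
    have h3 := Finset.card_filter_add_card_filter_not
      (s := Finset.Icc 1 (δ-1)) (p := fun i => q ∣ i)
    rw [hIdef]
    have h4 : (Finset.Icc 1 (δ-1)).card = δ - 1 := by
      rw [Nat.card_Icc]; omega
    omega
  have hBI : B ⊆ I := by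
    intro x hx
    obtain ⟨k, hk1, hk2, rfl⟩ := (hBmem x).1 hx
    have hkt : k * t ≤ ε * t := Nat.mul_le_mul_right _ hk2
    have hεt : ε * t ≤ δ - 2 := by rw [hεdef]; exact Nat.div_mul_le_self _ _
    exact (hImem _).2 ⟨by omega, by omega, S.ndvd_kt1 (by omega)⟩
  have hBcard : B.card = ε + 1 - lb := by
    rw [hBdef, Finset.card_image_of_injective _ (fun a b hab => hktinj a b hab), Nat.card_Icc]
  have hI'card : I'.card + (ε + 1 - lb) = (δ-1) - (δ-1)/q := by
    rw [hI'def, Finset.card_sdiff_of_subset hBI, hBcard, ← hIcard]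
    have := Finset.card_le_card hBI
    omega
  -- assemble
  refine ⟨I'.card, ?_, ?_, hI'card⟩
  · rw [hset, Set.ncard_coe_finset]
    rw [Finset.card_insert_of_notMem h0D]
    rw [Finset.card_biUnion hdisj]
    have hsplit := Finset.sum_filter_add_sum_filter_not I'
      (fun i => t ∣ i ∨ (q % 2 = 1 ∧ i = ((q-1)/2) * t + 1)) (fun i => (D i).card)
    rw [← hsplit]
    have h1 : ∑ i ∈ I'.filter (fun i => t ∣ i ∨ (q % 2 = 1 ∧ i = ((q-1)/2) * t + 1)),
        (D i).card
        = (εb + (if q % 2 = 1 ∧ (q-1)/2 ≤ ε then 1 else 0)) * (2*s) := by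
      rw [← hPcard]
      apply Finset.sum_const_nat
      intro i hi
      have hif := Finset.mem_filter.1 hi
      rw [hDcard i hif.1, if_pos hif.2]
    have h2 : ∑ i ∈ I'.filter (fun i => ¬(t ∣ i ∨ (q % 2 = 1 ∧ i = ((q-1)/2) * t + 1))),
        (D i).card
        = (I'.card - (εb + (if q % 2 = 1 ∧ (q-1)/2 ≤ ε then 1 else 0))) * (4*s) := by
      have hcn' : (I'.filter (fun i => ¬(t ∣ i ∨ (q % 2 = 1 ∧ i = ((q-1)/2) * t + 1)))).card
          = I'.card - (εb + (if q % 2 = 1 ∧ (q-1)/2 ≤ ε then 1 else 0)) := by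
        have h3 := Finset.card_filter_add_card_filter_not
          (s := I') (p := fun i => t ∣ i ∨ (q % 2 = 1 ∧ i = ((q-1)/2) * t + 1))
        omega
      rw [← hcn']
      apply Finset.sum_const_nat
      intro i hi
      have hif := Finset.mem_filter.1 hi
      rw [hDcard i hif.1, if_neg hif.2]
    rw [h1, h2]
    omega
  · rw [← hPcard]
    exact Finset.card_filter_le _ _
end Setup

lemma ceil_div_id (a q : ℕ) (hq : 2 ≤ q) : (a*(q-1) + q - 1) / q = a - a/q := by
  have hc : q * (a / q) + a % q = a := Nat.div_add_mod a q
  have hrq : a % q < q := Nat.mod_lt _ (by omega)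
  have hcle : a/q ≤ a := Nat.div_le_self _ _
  have h1 : q * (a - a/q) = a*(q-1) + a%q := by
    have e1 : q * (a - a/q) = q*a - q*(a/q) := Nat.mul_sub _ _ _
    have e : q*(a/q) = a - a%q := by omega
    have e2 : a*(q-1) = a*q - a*1 := Nat.mul_sub _ _ _
    have e3 : q*a = a*q := mul_comm _ _
    have e9 : a*1 ≤ a*q := Nat.mul_le_mul_left _ (by omega)
    have hra : a % q ≤ a := Nat.mod_le _ _
    rw [e1, e]
    omega
  have h2 : a*(q-1) + q - 1 = q * (a - a/q) + (q - 1 - a%q) := by omega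
  rw [h2, Nat.mul_add_div (by omega)]
  have h3 : (q - 1 - a%q) / q = 0 := Nat.div_eq_of_lt (by omega)
  omega

lemma count_to_goal (s q N C ε Z μ m : ℕ) (hm : m = 2*s)
    (hEC : Z + μ ≤ C) (hCB : C + (ε + 1 - ((q-1)/2 + 1)) = N)
    (hεub : ε ≤ q - 2) (hq : 2 ≤ q)
    (hμ : (q % 2 = 1 ∧ (q-1)/2 ≤ ε ∧ μ = 1) ∨ ((q % 2 = 0 ∨ ε < (q-1)/2) ∧ μ = 0)) :
    ((q-1)/2 ≤ ε →
      1 + (Z + μ)*(2*s) + (C - (Z+μ))*(4*s) = 1 + 2*m*N - (2*ε - (q-2))*m - Z*m)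
    ∧ (ε < (q-1)/2 →
      1 + (Z + μ)*(2*s) + (C - (Z+μ))*(4*s) = 1 + 2*m*N - Z*m) := by
  subst hm
  constructor
  · intro hbr
    have h1 : (Z+μ) + (C-(Z+μ))*2 = 2*N - ((2*ε - (q-2)) + Z) := by omega
    have hA : (2*ε - (q-2)) + Z ≤ 2*N := by omega
    have e0 : 1 + (Z + μ)*(2*s) + (C - (Z+μ))*(4*s)
        = 1 + ((Z+μ) + (C-(Z+μ))*2)*(2*s) := by ring
    rw [e0, h1]
    have e1 : (2*N - ((2*ε-(q-2)) + Z))*(2*s)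
        = (2*N)*(2*s) - ((2*ε-(q-2)) + Z)*(2*s) := Nat.sub_mul _ _ _
    have e2 : ((2*ε-(q-2)) + Z)*(2*s) = (2*ε-(q-2))*(2*s) + Z*(2*s) := add_mul _ _ _
    have e3 : ((2*ε-(q-2)) + Z)*(2*s) ≤ (2*N)*(2*s) := Nat.mul_le_mul_right _ hA
    have e4 : 2*(2*s)*N = (2*N)*(2*s) := by ring
    omega
  · intro hbr
    have h1 : (Z+μ) + (C-(Z+μ))*2 = 2*N - Z := by omega
    have hA : Z ≤ 2*N := by omega
    have e0 : 1 + (Z + μ)*(2*s) + (C - (Z+μ))*(4*s)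
        = 1 + ((Z+μ) + (C-(Z+μ))*2)*(2*s) := by ring
    rw [e0, h1]
    have e1 : (2*N - Z)*(2*s) = (2*N)*(2*s) - Z*(2*s) := Nat.sub_mul _ _ _
    have e3 : Z*(2*s) ≤ (2*N)*(2*s) := Nat.mul_le_mul_right _ hA
    have e4 : 2*(2*s)*N = (2*N)*(2*s) := by ring
    omega


/-- Theorem 25: dimension of the reversible BCH code `C_{(q,n,2δ,1−δ)}` of length
`n = (q^m − 1)/(q − 1)` for even `m ≥ 4` and `2 ≤ δ ≤ q^{m/2}`, with
`ε = ⌊(δ−2)(q−1)/(q^{m/2}−1)⌋` and `ε̄ = ⌊(δ−1)(q−1)/(q^{m/2}−1)⌋`: the set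
`{0} ∪ ⋃_{i=1}^{δ−1} (C_i ∪ (−C_i))` has cardinality
`1 + 2m⌈(δ−1)(q−1)/q⌉ − (2ε − (q−2))m − ε̄m` when `ε ≥ ⌊(q−1)/2⌋`, and
`1 + 2m⌈(δ−1)(q−1)/q⌉ − ε̄m` when `ε < ⌊(q−1)/2⌋`; the code's dimension is `n`
minus this cardinality. -/
theorem reversible_BCH_dimension_projective_even_m (q m n δ : ℕ) (hq : IsPrimePow q)
    (hm : 4 ≤ m) (hmeven : Even m) (hn : n = (q ^ m - 1) / (q - 1))
    (hδ : 2 ≤ δ) (hδ' : δ ≤ q ^ (m / 2)) :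
    (((δ - 2) * (q - 1)) / (q ^ (m / 2) - 1) ≥ (q - 1) / 2 →
      ({0} ∪ ⋃ i ∈ Set.Icc 1 (δ - 1),
          (cosetC q n i ∪ (n - ·) '' cosetC q n i)).ncard =
        1 + 2 * m * (((δ - 1) * (q - 1) + q - 1) / q) -
          (2 * (((δ - 2) * (q - 1)) / (q ^ (m / 2) - 1)) - (q - 2)) * m -
          (((δ - 1) * (q - 1)) / (q ^ (m / 2) - 1)) * m) ∧
    (((δ - 2) * (q - 1)) / (q ^ (m / 2) - 1) < (q - 1) / 2 →
      ({0} ∪ ⋃ i ∈ Set.Icc 1 (δ - 1),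
          (cosetC q n i ∪ (n - ·) '' cosetC q n i)).ncard =
        1 + 2 * m * (((δ - 1) * (q - 1) + q - 1) / q) -
          (((δ - 1) * (q - 1)) / (q ^ (m / 2) - 1)) * m) := by
  have hq2 : 2 ≤ q := hq.two_le
  obtain ⟨s, hs2⟩ := hmeven
  have hms : m = 2*s := by omega
  have hm2 : m / 2 = s := by omega
  have hss : 2 ≤ s := by omega
  have hdvd : (q - 1) ∣ q ^ s - 1 := by
    have := Nat.sub_dvd_pow_sub_pow q 1 s
    simpa using this
  have ht : (q-1) * ((q ^ s - 1)/(q-1)) = q ^ s - 1 := Nat.mul_div_cancel' hdvd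
  set t := (q ^ s - 1)/(q-1) with htdef
  have hp : 1 ≤ q ^ s := Nat.one_le_pow _ _ (by omega)
  have hnn : n = (q ^ s + 1) * t := by
    rw [hn, hms]
    have h2 : q ^ (2*s) = q ^ s * q ^ s := by rw [two_mul, pow_add]
    have h1 : q ^ (2*s) - 1 = (q ^ s + 1) * ((q-1) * t) := by
      rw [ht, h2]
      zify [hp, show 1 ≤ q ^ s * q ^ s from Nat.one_le_iff_ne_zero.2 (by positivity)]
      ring
    rw [h1]
    have h3 : (q ^ s + 1) * ((q-1) * t) = (q-1) * ((q^s+1) * t) := by ring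
    rw [h3, Nat.mul_div_cancel_left _ (by omega : 0 < q - 1)]
  have S : Setup q s t n := ⟨hq2, hss, ht, hnn⟩
  have htpos : 0 < t := by have := S.tlb; omega
  have hε : ((δ - 2) * (q - 1)) / (q ^ (m / 2) - 1) = (δ-2)/t := by
    rw [hm2, ← ht, mul_comm (δ-2) (q-1)]
    exact Nat.mul_div_mul_left _ _ (by omega)
  have hεb : ((δ - 1) * (q - 1)) / (q ^ (m / 2) - 1) = (δ-1)/t := by
    rw [hm2, ← ht, mul_comm (δ-1) (q-1)]
    exact Nat.mul_div_mul_left _ _ (by omega)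
  have hδ's : δ ≤ q ^ s := by rwa [hm2] at hδ'
  obtain ⟨C, hncard, hEC, hCB⟩ := S.main δ hδ hδ's
  have hX : ((δ-1)*(q-1) + q - 1) / q = (δ-1) - (δ-1)/q := ceil_div_id (δ-1) q hq2
  have hεub : (δ-2)/t ≤ q - 2 := by
    by_contra hc
    have h1 : (q-1) * t ≤ ((δ-2)/t) * t := Nat.mul_le_mul_right _ (by omega)
    have h2 : ((δ-2)/t) * t ≤ δ - 2 := Nat.div_mul_le_self _ _
    have := S.ht
    omega
  -- μ characterization
  have hμ : (q % 2 = 1 ∧ (q-1)/2 ≤ (δ-2)/t ∧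
        (if q % 2 = 1 ∧ (q-1)/2 ≤ (δ-2)/t then 1 else 0) = 1) ∨
      ((q % 2 = 0 ∨ (δ-2)/t < (q-1)/2) ∧
        (if q % 2 = 1 ∧ (q-1)/2 ≤ (δ-2)/t then 1 else 0) = 0) := by
    by_cases hc : q % 2 = 1 ∧ (q-1)/2 ≤ (δ-2)/t
    · exact Or.inl ⟨hc.1, hc.2, if_pos hc⟩
    · refine Or.inr ⟨?_, if_neg hc⟩
      by_cases h1 : q % 2 = 1
      · right
        by_contra h2
        exact hc ⟨h1, by omega⟩
      · left; omega
  have hfin := count_to_goal s q ((δ-1) - (δ-1)/q) C ((δ-2)/t) ((δ-1)/t)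
    (if q % 2 = 1 ∧ (q-1)/2 ≤ (δ-2)/t then 1 else 0) m hms hEC hCB hεub hq2 hμ
  constructor
  · intro hbr
    rw [hε] at hbr
    rw [hncard, hε, hεb, hX]
    exact hfin.1 hbr
  · intro hbr
    rw [hε] at hbr
    rw [hncard, hεb, hX]
    exact hfin.2 hbr
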